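/- Adequacy of the translation tr into the monotone μ-calculus: for every formula ξ ∈ L_NF and every game model S, ⟦ξ⟧^S = ⟦tr(ξ)⟧^S (the right-hand side computed in the monotone μ-calculus semantics; tr(ξ) is a sentence). -/

import Mathlib

/-! Normal-form game logic: syntax -/

mutual
inductive GLForm : Type where
  | atom  : ℕ → GLForm
  | natom : ℕ → GLForm
  | or    : GLForm → GLForm → GLForm
  | and   : GLForm → GLForm → GLForm
  | dia   : GLGame → GLForm → GLForm
inductive GLGame : Type where
  | atg   : ℕ → GLGame
  | atgd  : ℕ → GLGame
  | comp  : GLGame → GLGame → GLGame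
  | cha   : GLGame → GLGame → GLGame
  | chd   : GLGame → GLGame → GLGame
  | star  : GLGame → GLGame
  | cross : GLGame → GLGame
  | test  : GLForm → GLGame
  | dtest : GLForm → GLGame
end

noncomputable instance : DecidableEq GLForm := Classical.decEq _
noncomputable instance : DecidableEq GLGame := Classical.decEq _

/-! Game models (monotone neighbourhood models via effectivity functions),
    and Knaster-Tarski least/greatest fixed points of set operators. -/

structure GameModel where
  S : Type
  E : ℕ → Set S → Set S
  mono : ∀ g, Monotone (E g)
  V : ℕ → Set S

def lfpSet {σ : Type} (f : Set σ → Set σ) : Set σ := sInf {X | f X ⊆ X}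
def gfpSet {σ : Type} (f : Set σ → Set σ) : Set σ := sSup {X | X ⊆ f X}

/-! Semantics of normal-form game logic over game models. -/

mutual
def GLForm.mng (M : GameModel) : GLForm → Set M.S
  | .atom p  => M.V p
  | .natom p => (M.V p)ᶜ
  | .or φ ψ  => GLForm.mng M φ ∪ GLForm.mng M ψ
  | .and φ ψ => GLForm.mng M φ ∩ GLForm.mng M ψ
  | .dia γ φ => GLGame.eff M γ (GLForm.mng M φ)
def GLGame.eff (M : GameModel) : GLGame → Set M.S → Set M.S
  | .atg g,  X => M.E g X
  | .atgd g, X => (M.E g Xᶜ)ᶜ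
  | .comp γ δ, X => GLGame.eff M γ (GLGame.eff M δ X)
  | .cha γ δ, X => GLGame.eff M γ X ∪ GLGame.eff M δ X
  | .chd γ δ, X => GLGame.eff M γ X ∩ GLGame.eff M δ X
  | .star γ, X => lfpSet (fun Y => X ∪ GLGame.eff M γ Y)
  | .cross γ, X => gfpSet (fun Y => X ∩ GLGame.eff M γ Y)
  | .test φ, X => GLForm.mng M φ ∩ X
  | .dtest φ, X => GLForm.mng M φ ∪ X
end

/-- Validity over game models. -/
def GLValid (φ : GLForm) : Prop := ∀ M : GameModel, GLForm.mng M φ = Set.univ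

/-! The monotone μ-calculus: syntax (in negation normal form), over a type `V`
    of fixpoint variables.  `dia g` is `⟨g⟩` and `box g` is `⟨g^d⟩`. -/

inductive MuForm (V : Type) : Type where
  | atom  : ℕ → MuForm V
  | natom : ℕ → MuForm V
  | var   : V → MuForm V
  | or    : MuForm V → MuForm V → MuForm V
  | and   : MuForm V → MuForm V → MuForm V
  | dia   : ℕ → MuForm V → MuForm V
  | box   : ℕ → MuForm V → MuForm V
  | mu    : V → MuForm V → MuForm V
  | nu    : V → MuForm V → MuForm V

variable {V : Type}

/-- Free variables. -/
def MuForm.FV : MuForm V → Set V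
  | .atom _  => ∅
  | .natom _ => ∅
  | .var x   => {x}
  | .or A B  => MuForm.FV A ∪ MuForm.FV B
  | .and A B => MuForm.FV A ∪ MuForm.FV B
  | .dia _ A => MuForm.FV A
  | .box _ A => MuForm.FV A
  | .mu x A  => MuForm.FV A \ {x}
  | .nu x A  => MuForm.FV A \ {x}

/-- All variables occurring (free or bound) in a formula. -/
def MuForm.vars : MuForm V → Set V
  | .atom _  => ∅
  | .natom _ => ∅
  | .var x   => {x}
  | .or A B  => MuForm.vars A ∪ MuForm.vars B
  | .and A B => MuForm.vars A ∪ MuForm.vars B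
  | .dia _ A => MuForm.vars A
  | .box _ A => MuForm.vars A
  | .mu x A  => insert x (MuForm.vars A)
  | .nu x A  => insert x (MuForm.vars A)

/-- `MuForm.Sub B A` : `B` is a subformula of `A` (reflexively). -/
def MuForm.Sub : MuForm V → MuForm V → Prop
  | B, .atom p  => B = .atom p
  | B, .natom p => B = .natom p
  | B, .var x   => B = .var x
  | B, .or A₁ A₂  => B = .or A₁ A₂ ∨ MuForm.Sub B A₁ ∨ MuForm.Sub B A₂
  | B, .and A₁ A₂ => B = .and A₁ A₂ ∨ MuForm.Sub B A₁ ∨ MuForm.Sub B A₂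
  | B, .dia g A => B = .dia g A ∨ MuForm.Sub B A
  | B, .box g A => B = .box g A ∨ MuForm.Sub B A
  | B, .mu x A  => B = .mu x A ∨ MuForm.Sub B A
  | B, .nu x A  => B = .nu x A ∨ MuForm.Sub B A

/-- `x <_C y` : `x` occurs freely in some subformula `σy.B` of `C`. -/
def ltV (C : MuForm V) (x y : V) : Prop :=
  ∃ B : MuForm V, (MuForm.Sub (.mu y B) C ∨ MuForm.Sub (.nu y B) C) ∧
    x ∈ MuForm.FV (MuForm.mu y B)

/-- `≤_C` : the reflexive-transitive closure of `<_C`. -/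
def leV (C : MuForm V) : V → V → Prop := Relation.ReflTransGen (ltV C)

/-- Local well-namedness: the transitive closure of `<_C` is irreflexive. -/
def LocallyWellNamed (C : MuForm V) : Prop := Irreflexive (Relation.TransGen (ltV C))

/-- Substitution of the formula `B` for the variable `x` (not binding-aware below
    binders of `x` itself). -/
def MuForm.subst [DecidableEq V] (x : V) (B : MuForm V) : MuForm V → MuForm V
  | .atom p  => .atom p
  | .natom p => .natom p
  | .var y   => if y = x then B else .var y
  | .or A₁ A₂  => .or (MuForm.subst x B A₁) (MuForm.subst x B A₂)
  | .and A₁ A₂ => .and (MuForm.subst x B A₁) (MuForm.subst x B A₂)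
  | .dia g A => .dia g (MuForm.subst x B A)
  | .box g A => .box g (MuForm.subst x B A)
  | .mu y A  => if y = x then .mu y A else .mu y (MuForm.subst x B A)
  | .nu y A  => if y = x then .nu y A else .nu y (MuForm.subst x B A)

/-! Semantics of the monotone μ-calculus over game models, relative to an
    assignment of the fixpoint variables. -/

def MuForm.mng (M : GameModel) [DecidableEq V] : MuForm V → (V → Set M.S) → Set M.S
  | .atom p, _  => M.V p
  | .natom p, _ => (M.V p)ᶜ
  | .var x, h   => h x
  | .or A B, h  => MuForm.mng M A h ∪ MuForm.mng M B h
  | .and A B, h => MuForm.mng M A h ∩ MuForm.mng M B h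
  | .dia g A, h => M.E g (MuForm.mng M A h)
  | .box g A, h => (M.E g (MuForm.mng M A h)ᶜ)ᶜ
  | .mu x A, h  => lfpSet (fun X => MuForm.mng M A (Function.update h x X))
  | .nu x A, h  => gfpSet (fun X => MuForm.mng M A (Function.update h x X))

/-! The translation `tr` from normal-form game logic into the monotone μ-calculus.
    The fixpoint variable `x^{⟨γ∘⟩φ}` associated to a fixpoint formula `⟨γ∘⟩φ`
    is encoded as the pair `(γ∘, φ)`. -/

/-- The type of fixpoint variables used by the translation. -/
abbrev GVar := GLGame × GLForm

mutual
/-- The translation `tr : L_NF → L^μ_NF`. -/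
def trF : GLForm → MuForm GVar
  | .atom p  => .atom p
  | .natom p => .natom p
  | .or φ ψ  => .or (trF φ) (trF ψ)
  | .and φ ψ => .and (trF φ) (trF ψ)
  | .dia γ φ => trG φ γ (trF φ)
termination_by φ => sizeOf φ
/-- `trG φ γ A` is `τ_φ(γ)(A)`. -/
def trG : GLForm → GLGame → MuForm GVar → MuForm GVar
  | _, .atg g, A  => .dia g A
  | _, .atgd g, A => .box g A
  | φ, .cha γ δ, A => .or (trG φ γ A) (trG φ δ A)
  | φ, .chd γ δ, A => .and (trG φ γ A) (trG φ δ A)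
  | φ, .comp γ δ, A => trG (.dia δ φ) γ (trG φ δ A)
  | φ, .star γ, A =>
      .mu (GLGame.star γ, φ) (.or A (trG (.dia (.star γ) φ) γ (.var (GLGame.star γ, φ))))
  | φ, .cross γ, A =>
      .nu (GLGame.cross γ, φ) (.and A (trG (.dia (.cross γ) φ) γ (.var (GLGame.cross γ, φ))))
  | _, .test ψ, A  => .and (trF ψ) A
  | _, .dtest ψ, A => .or (trF ψ) A
termination_by _ γ _ => sizeOf γ
end

/-! By simultaneous induction on formulas and games, `⟦τ_φ(γ)(A)⟧_h = Ê_γ(⟦A⟧_h)` as long as no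
variable bound inside `τ_φ(γ)` occurs free in `A`; this holds for `A = tr(φ)`, a sentence. -/

namespace MuForm

variable [DecidableEq V] (M : GameModel)

theorem mng_congr :
    ∀ (A : MuForm V) {h h' : V → Set M.S}, Set.EqOn h h' A.FV → A.mng M h = A.mng M h'
  | .atom _, _, _, _ | .natom _, _, _, _ => rfl
  | .var _, _, _, hh => hh rfl
  | .or A B, _, _, hh | .and A B, _, _, hh => by
      rw [mng, mng, mng_congr A (hh.mono Set.subset_union_left),
        mng_congr B (hh.mono Set.subset_union_right)]
  | .dia _ A, _, _, hh | .box _ A, _, _, hh => by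
      rw [mng, mng, mng_congr A hh]
  | .mu x A, h, h', hh | .nu x A, h, h', hh => by
      rw [mng, mng]
      congr 1
      funext X
      refine mng_congr A fun v hv => ?_
      by_cases hvx : v = x
      · simp [hvx]
      · simpa [hvx] using hh ⟨hv, hvx⟩

theorem mng_update_of_notMem_FV {A : MuForm V} {x : V} (hx : x ∉ A.FV)
    (h : V → Set M.S) (X : Set M.S) : A.mng M (Function.update h x X) = A.mng M h :=
  mng_congr M A fun _ hv => Function.update_of_ne (ne_of_mem_of_not_mem hv hx) _ _

end MuForm

mutual
theorem FV_trF : ∀ φ : GLForm, (trF φ).FV = ∅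
  | .atom _ | .natom _ => by simp [trF, MuForm.FV]
  | .or φ ψ | .and φ ψ => by simp [trF, MuForm.FV, FV_trF φ, FV_trF ψ]
  | .dia γ φ => by
      rw [trF, ← Set.subset_empty_iff, ← FV_trF φ]
      exact FV_trG_subset φ γ (trF φ)
termination_by φ => sizeOf φ

theorem FV_trG_subset : ∀ (φ : GLForm) (γ : GLGame) (A : MuForm GVar),
    (trG φ γ A).FV ⊆ A.FV
  | _, .atg _, _ | _, .atgd _, _ => by simp [trG, MuForm.FV]
  | φ, .cha γ δ, A | φ, .chd γ δ, A => by
      rw [trG, MuForm.FV]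
      exact Set.union_subset (FV_trG_subset φ γ A) (FV_trG_subset φ δ A)
  | φ, .comp γ δ, A => by
      rw [trG]
      exact (FV_trG_subset _ γ _).trans (FV_trG_subset φ δ A)
  | φ, .star γ, A | φ, .cross γ, A => by
      rw [trG, MuForm.FV, MuForm.FV]
      rintro v ⟨hv | hv, hvx⟩
      · exact hv
      · exact absurd (FV_trG_subset _ γ _ hv) hvx
  | _, .test ψ, _ | _, .dtest ψ, _ => by simp [trG, MuForm.FV, FV_trF ψ]
termination_by _ γ _ => sizeOf γ
end

/-- Every free variable `x^{⟨δ∘⟩ψ}` of `A` has `δ` larger than `γ`. Since `τ_φ(γ)` binds only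
variables whose game is a subterm of `γ`, none of them captures a free variable of `A`. -/
def FVAbove (γ : GLGame) (A : MuForm GVar) : Prop :=
  ∀ v ∈ A.FV, sizeOf γ < sizeOf v.1

theorem FVAbove.of_sizeOf_le {γ δ : GLGame} {A : MuForm GVar} (hA : FVAbove δ A)
    (hle : sizeOf γ ≤ sizeOf δ) : FVAbove γ A :=
  fun v hv => hle.trans_lt (hA v hv)

theorem FVAbove.trG {γ δ : GLGame} {φ : GLForm} {A : MuForm GVar} (hA : FVAbove γ A) :
    FVAbove γ (trG φ δ A) :=
  fun v hv => hA v (FV_trG_subset φ δ A hv)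

theorem FVAbove.trF (γ : GLGame) (φ : GLForm) : FVAbove γ (trF φ) := by
  simp [FVAbove, FV_trF]

theorem FVAbove.var {γ δ : GLGame} (φ : GLForm) (h : sizeOf γ < sizeOf δ) :
    FVAbove γ (.var (δ, φ)) := by
  rintro v rfl
  exact h

theorem FVAbove.notMem_FV {γ : GLGame} {φ : GLForm} {A : MuForm GVar} (hA : FVAbove γ A) :
    (γ, φ) ∉ A.FV :=
  fun hv => lt_irrefl _ (hA _ hv)

mutual
theorem mng_trF (M : GameModel) : ∀ (φ : GLForm) (h : GVar → Set M.S),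
    (trF φ).mng M h = φ.mng M
  | .atom _, _ | .natom _, _ => by rw [trF, MuForm.mng, GLForm.mng]
  | .or φ ψ, h | .and φ ψ, h => by
      rw [trF, MuForm.mng, GLForm.mng, mng_trF M φ h, mng_trF M ψ h]
  | .dia γ φ, h => by
      rw [trF, GLForm.mng, mng_trG M γ φ (trF φ) h (.trF γ φ), mng_trF M φ h]
termination_by φ _ => sizeOf φ

theorem mng_trG (M : GameModel) : ∀ (γ : GLGame) (φ : GLForm) (A : MuForm GVar)
    (h : GVar → Set M.S), FVAbove γ A → (trG φ γ A).mng M h = γ.eff M (A.mng M h)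
  | .atg _, _, _, _, _ | .atgd _, _, _, _, _ => by rw [trG, MuForm.mng, GLGame.eff]
  | .cha γ δ, φ, A, h, hA | .chd γ δ, φ, A, h, hA => by
      rw [trG, MuForm.mng, GLGame.eff,
        mng_trG M γ φ A h (hA.of_sizeOf_le (by simp +arith)),
        mng_trG M δ φ A h (hA.of_sizeOf_le (by simp +arith))]
  | .comp γ δ, φ, A, h, hA => by
      rw [trG, GLGame.eff, mng_trG M γ _ _ h (hA.trG.of_sizeOf_le (by simp +arith)),
        mng_trG M δ φ A h (hA.of_sizeOf_le (by simp +arith))]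
  | .star γ, φ, A, h, hA | .cross γ, φ, A, h, hA => by
      rw [trG, MuForm.mng, GLGame.eff]
      congr 1
      funext X
      rw [MuForm.mng, MuForm.mng_update_of_notMem_FV M hA.notMem_FV,
        mng_trG M γ _ _ _ (.var φ (by simp)), MuForm.mng, Function.update_self]
  | .test ψ, _, _, h, _ | .dtest ψ, _, _, h, _ => by
      rw [trG, MuForm.mng, GLGame.eff, mng_trF M ψ h]
termination_by γ _ _ _ _ => sizeOf γ
end

/-- Adequacy of the translation `tr` into the monotone μ-calculus:
    for every `ξ ∈ L_NF` and every game model, `⟦ξ⟧ = ⟦tr(ξ)⟧` (the right-hand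
    side computed in the monotone μ-calculus semantics; `tr(ξ)` is a sentence, so
    its meaning does not depend on the assignment `h`). -/
theorem tr_adequate (ξ : GLForm) (M : GameModel) (h : GVar → Set M.S) :
    GLForm.mng M ξ = MuForm.mng M (trF ξ) h :=
  (mng_trF M ξ h).symm
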